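/- arXiv:2409.04945 — 2 statements merged into one kernel-verified Lean document; each statement's English description precedes it below -/
import Mathlib

section
/- Let f : ℝ^K → ℝ and g : ℝ^K → ℝ be convex, with f differentiable, and let F = f + g. Let h(·, V) be differentiable convex majorizers of g: g(x) ≤ h(x, V) for all x, V with g(V) = h(V, V). Let P(V) be the minimizer of f(·) + h(·, V), so that ∇f(P(V)) + ∇_x h(P(V), V) = 0. Then for any x, F(x) − F(P(V)) ≥ h(x, x) − h(x, V). -/
/-!
Adding the first-order convexity inequalities of `f` and `h(·, V)` at `P V` makes the gradient
terms cancel by stationarity, so `f (P V) + h (P V) V ≤ f x + h x V`. Majorization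
`g (P V) ≤ h (P V) V` and tightness `g x = h x x` turn this into the claim.
-/

open AffineMap in
theorem ConvexOn.apply_add_apply_sub_le_of_hasFDerivAt {E : Type*} [NormedAddCommGroup E]
    [NormedSpace ℝ E] {s : Set E} {φ : E → ℝ} {φ' : E →L[ℝ] ℝ} {x y : E}
    (hφ : ConvexOn ℝ s φ) (hx : x ∈ s) (hy : y ∈ s) (hφ' : HasFDerivAt φ φ' x) :
    φ x + φ' (y - x) ≤ φ y := by
  let ℓ : ℝ →ᵃ[ℝ] E := lineMap x y
  have hline : ConvexOn ℝ (ℓ ⁻¹' s) (φ ∘ ℓ) := hφ.comp_affineMap ℓ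
  have hderiv : HasDerivAt (φ ∘ ℓ) (φ' (y - x)) 0 := by
    have hφ'₀ : HasFDerivAt φ φ' (ℓ 0) := by simpa [ℓ] using hφ'
    exact hφ'₀.comp_hasDerivAt (0 : ℝ) hasDerivAt_lineMap
  have hslope := hline.le_slope_of_hasDerivAt (by simpa [ℓ] using hx) (by simpa [ℓ] using hy)
    zero_lt_one hderiv
  simp only [slope_def_field, Function.comp_apply, ℓ, lineMap_apply_zero, lineMap_apply_one,
    sub_zero, div_one] at hslope
  linarith

theorem stmt8_general (K : ℕ)
    (f g : EuclideanSpace ℝ (Fin K) → ℝ)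
    (h : EuclideanSpace ℝ (Fin K) → EuclideanSpace ℝ (Fin K) → ℝ)
    (hf_conv : ConvexOn ℝ Set.univ f) (hf_diff : Differentiable ℝ f)
    (hh_conv : ∀ V, ConvexOn ℝ Set.univ fun x => h x V)
    (hh_diff : ∀ V, Differentiable ℝ fun x => h x V)
    (hmaj : ∀ x V, g x ≤ h x V) (htight : ∀ V, g V = h V V)
    (Pm : EuclideanSpace ℝ (Fin K) → EuclideanSpace ℝ (Fin K))
    (hstat : ∀ V, fderiv ℝ f (Pm V) + fderiv ℝ (fun x => h x V) (Pm V) = 0) :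
    ∀ x V, (f x + g x) - (f (Pm V) + g (Pm V)) ≥ h x x - h x V := by
  intro x V
  have hf_tangent := hf_conv.apply_add_apply_sub_le_of_hasFDerivAt (Set.mem_univ (Pm V))
    (Set.mem_univ x) (hf_diff (Pm V)).hasFDerivAt
  have hh_tangent := (hh_conv V).apply_add_apply_sub_le_of_hasFDerivAt (Set.mem_univ (Pm V))
    (Set.mem_univ x) (hh_diff V (Pm V)).hasFDerivAt
  have hcancel :
      fderiv ℝ f (Pm V) (x - Pm V) + fderiv ℝ (fun y => h y V) (Pm V) (x - Pm V) = 0 := by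
    simpa using congrArg (fun L => L (x - Pm V)) (hstat V)
  linarith [hmaj (Pm V) V, htight x]

/-- Key MM inequality (Lemma 1): if `h(·,V)` are differentiable convex majorizers of a
convex `g` tight at the anchor, `f` is convex differentiable, and `P V` is a stationary
point of `f + h(·,V)`, then `F(x) − F(P V) ≥ h(x,x) − h(x,V)` where `F = f + g`. -/
theorem stmt8 (K : ℕ)
    (f g : EuclideanSpace ℝ (Fin K) → ℝ)
    (h : EuclideanSpace ℝ (Fin K) → EuclideanSpace ℝ (Fin K) → ℝ)
    (hf_conv : ConvexOn ℝ Set.univ f) (hf_diff : Differentiable ℝ f)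
    (hg_conv : ConvexOn ℝ Set.univ g)
    (hh_conv : ∀ V, ConvexOn ℝ Set.univ fun x => h x V)
    (hh_diff : ∀ V, Differentiable ℝ fun x => h x V)
    (hmaj : ∀ x V, g x ≤ h x V) (htight : ∀ V, g V = h V V)
    (Pm : EuclideanSpace ℝ (Fin K) → EuclideanSpace ℝ (Fin K))
    (hstat : ∀ V, fderiv ℝ f (Pm V) + fderiv ℝ (fun x => h x V) (Pm V) = 0) :
    ∀ x V, (f x + g x) - (f (Pm V) + g (Pm V)) ≥ h x x - h x V :=
  stmt8_general K f g h hf_conv hf_diff hh_conv hh_diff hmaj htight Pm hstat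
end

section
/- Let F : ℝ^K → ℝ, and suppose a sequence x^0, x^1, ... satisfies for each i and all x: F(x) − F(x^{i+1}) ≥ −∑_k (|x_k| − |x^i_k|)²/(2|x^i_k|), and F(x^{i+1}) ≤ F(x^i). Then for any s ≥ 1 and any fixed x*, F(x^s) − F(x*) ≤ (1/(2s)) ∑_{i=0}^{s−1} ∑_k (|x*_k| − |x^i_k|)²/|x^i_k|. -/
open Finset in
theorem Antitone.sub_le_sum_div_of_succ_sub_le {α : Type*} [Field α] [LinearOrder α]
    [IsStrictOrderedRing α] {f b : ℕ → α} {c : α} (hf : Antitone f)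
    (hstep : ∀ i, f (i + 1) - c ≤ b i) {s : ℕ} (hs : 0 < s) :
    f s - c ≤ (∑ i ∈ range s, b i) / s := by
  rw [le_div_iff₀ (by exact_mod_cast hs)]
  calc (f s - c) * s = ∑ _i ∈ range s, (f s - c) := by
        rw [sum_const, card_range, nsmul_eq_mul, mul_comm]
    _ ≤ ∑ i ∈ range s, b i := sum_le_sum fun i hi ↦
      (sub_le_sub_right (hf (mem_range.mp hi)) c).trans (hstep i)

open Finset in
/-- O(1/s) convergence rate (Theorem 1): summing the per-step MM inequality and using
monotonicity of `F` along the iterates. -/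
theorem stmt10 (K : ℕ) (F : (Fin K → ℝ) → ℝ) (x : ℕ → Fin K → ℝ)
    (h1 : ∀ i, ∀ z : Fin K → ℝ,
      F z - F (x (i + 1)) ≥ -∑ k, (|z k| - |x i k|) ^ 2 / (2 * |x i k|))
    (h2 : ∀ i, F (x (i + 1)) ≤ F (x i))
    (xstar : Fin K → ℝ) (s : ℕ) (hs : 1 ≤ s) :
    F (x s) - F xstar ≤
      (1 / (2 * s)) * ∑ i ∈ Finset.range s, ∑ k, (|xstar k| - |x i k|) ^ 2 / |x i k| := by
  have hstep : ∀ i, F (x (i + 1)) - F xstar ≤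
      ∑ k, (|xstar k| - |x i k|) ^ 2 / (2 * |x i k|) := fun i ↦ by linarith [h1 i xstar]
  have hrate := (antitone_nat_of_succ_le (f := F ∘ x) h2).sub_le_sum_div_of_succ_sub_le
    hstep hs
  refine hrate.trans_eq ?_
  simp only [mul_sum, sum_div]
  refine sum_congr rfl fun i _ ↦ sum_congr rfl fun k _ ↦ ?_
  ring
end
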